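/- arXiv:2208.07289 — 2 statements merged into one kernel-verified Lean document; each statement's English description precedes it below -/
import Mathlib

section
/- Let F : ℝⁿ → ℝ and suppose there exist row vectors A, C and scalars b, d such that for all x and all Δx with ‖Δx‖_∞ ≤ δ, A·Δx + b ≤ F(x + Δx) - F(x) ≤ C·Δx + d. If max(|b - ‖A‖₁·δ|, |d + ‖C‖₁·δ|) ≤ ε, then F is (δ, ε)-globally robust: for all x and all Δx with ‖Δx‖_∞ ≤ δ, |F(x + Δx) - F(x)| ≤ ε. -/
theorem abs_sum_mul_le_sum_abs_mul_of_abs_le {ι R : Type*} [CommRing R] [LinearOrder R]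
    [IsOrderedRing R] (s : Finset ι) (a v : ι → R) {δ : R} (hv : ∀ i ∈ s, |v i| ≤ δ) :
    |∑ i ∈ s, a i * v i| ≤ (∑ i ∈ s, |a i|) * δ :=
  calc |∑ i ∈ s, a i * v i| ≤ ∑ i ∈ s, |a i * v i| := Finset.abs_sum_le_sum_abs _ _
    _ ≤ ∑ i ∈ s, |a i| * δ := Finset.sum_le_sum fun i hi => by
        rw [abs_mul]; exact mul_le_mul_of_nonneg_left (hv i hi) (abs_nonneg _)
    _ = (∑ i ∈ s, |a i|) * δ := (Finset.sum_mul _ _ _).symm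

open Finset in
/-- Sufficient condition for (δ, ε)-global robustness from linear bounds on
the output variation. -/
theorem global_robustness_sufficient {n : ℕ} (F : (Fin n → ℝ) → ℝ)
    (A C : Fin n → ℝ) (b d δ ε : ℝ)
    (hbound : ∀ (x Δx : Fin n → ℝ), (∀ i, |Δx i| ≤ δ) →
      (∑ i, A i * Δx i) + b ≤ F (x + Δx) - F x ∧
      F (x + Δx) - F x ≤ (∑ i, C i * Δx i) + d)
    (hcond : max |b - (∑ i, |A i|) * δ| |d + (∑ i, |C i|) * δ| ≤ ε) :
    ∀ (x Δx : Fin n → ℝ), (∀ i, |Δx i| ≤ δ) → |F (x + Δx) - F x| ≤ ε := by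
  intro x Δx hΔx
  obtain ⟨hlower, hupper⟩ := hbound x Δx hΔx
  have hA := abs_sum_mul_le_sum_abs_mul_of_abs_le univ A Δx fun i _ => hΔx i
  have hC := abs_sum_mul_le_sum_abs_mul_of_abs_le univ C Δx fun i _ => hΔx i
  refine (abs_le_max_abs_abs ?_ ?_).trans hcond
  · linarith [neg_le_of_abs_le hA]
  · linarith [le_of_abs_le hC]
end

section
/- Backward propagation step soundness: suppose Δout ≥ Σ_{i ∈ I} A_i·Δx_i + b holds for all admissible perturbations, and for a particular index i₀ ∈ I the distance Δx_{i₀} satisfies Ψ_j Δx_j + Ψ_k Δx_k + λ ≤ Δx_{i₀} ≤ Ω_j Δx_j + Ω_k Δx_k + μ. Define A'_j = A_j + A_{i₀}⁺Ψ_j + A_{i₀}⁻Ω_j, A'_k = A_k + A_{i₀}⁺Ψ_k + A_{i₀}⁻Ω_k, A'_h = A_h for h ∉ {i₀, j, k}, and b' = b + A_{i₀}⁺λ + A_{i₀}⁻μ, where a⁺ = max(a,0), a⁻ = min(a,0). Then Δout ≥ Σ_{h ∈ (I ∖ {i₀}) ∪ {j,k}} A'_h·Δx_h + b'. -/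
/-! Since `A i₀ = max (A i₀) 0 + min (A i₀) 0`, the term `A i₀ * Δ i₀` is bounded below by the
positive part times the layer's lower bound plus the negative part times its upper bound; this
bound is linear in `Δ j`, `Δ k`, and substituting it for `A i₀ * Δ i₀` in the given lower bound
yields the new coefficients. -/

theorem max_zero_mul_add_min_zero_mul_le_mul {α : Type*} [Ring α] [LinearOrder α]
    [IsStrictOrderedRing α] {a x L U : α} (hL : L ≤ x) (hU : x ≤ U) :
    max a 0 * L + min a 0 * U ≤ a * x :=
  calc max a 0 * L + min a 0 * U
      ≤ max a 0 * x + min a 0 * x :=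
        add_le_add (mul_le_mul_of_nonneg_left hL (le_max_right a 0))
          (mul_le_mul_of_nonpos_left hU (min_le_right a 0))
    _ = a * x := by rw [← add_mul, max_add_min, add_zero]

open Finset in
theorem mul_add_sum_erase_union_pair {ι R : Type*} [DecidableEq ι] [CommSemiring R]
    {I : Finset ι} {i₀ j k : ι} (hi₀ : i₀ ∈ I) (hji : j ≠ i₀) (hki : k ≠ i₀) (hjk : j ≠ k)
    (A Δ : ι → R) (cj ck : R) :
    A i₀ * Δ i₀ + ∑ h ∈ I.erase i₀ ∪ {j, k},
        (if h = j then (if j ∈ I then A j else 0) + cj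
         else if h = k then (if k ∈ I then A k else 0) + ck
         else A h) * Δ h
      = ∑ h ∈ I, A h * Δ h + cj * Δ j + ck * Δ k := by
  set S := I.erase i₀
  have hS : S ⊆ S ∪ {j, k} := subset_union_left
  have hsummand : ∀ h ∈ S ∪ {j, k},
      (if h = j then (if j ∈ I then A j else 0) + cj
       else if h = k then (if k ∈ I then A k else 0) + ck
       else A h) * Δ h
      = (if h ∈ S then A h * Δ h else 0)
        + (if h = j then cj * Δ j else 0) + (if h = k then ck * Δ k else 0) := by
    intro h hh
    by_cases hj : h = j
    · subst hj
      by_cases hI : h ∈ I <;> simp [S, hI, hji, hjk, add_mul]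
    by_cases hk : h = k
    · subst hk
      by_cases hI : h ∈ I <;> simp [S, hI, hki, hj, add_mul]
    have : h ∈ S := by simpa [hj, hk] using hh
    simp [this, hj, hk]
  rw [sum_congr rfl hsummand, sum_add_distrib, sum_add_distrib, sum_ite_mem,
    inter_eq_right.2 hS, sum_ite_eq', sum_ite_eq', if_pos (by simp), if_pos (by simp),
    ← add_assoc, ← add_assoc, add_sum_erase I (fun h ↦ A h * Δ h) hi₀]

open Finset in
/-- Inductive step of backward symbolic propagation: eliminating the distance
`Δx_{i₀}` from a linear lower bound by substituting the layer's linear distance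
bounds, with the coefficient split by sign. -/
theorem backward_propagation_step {ι : Type*} [DecidableEq ι]
    (I : Finset ι) (A : ι → ℝ) (Δ : ι → ℝ) (b Δout : ℝ)
    (i₀ j k : ι) (hi₀ : i₀ ∈ I) (hji : j ≠ i₀) (hki : k ≠ i₀) (hjk : j ≠ k)
    (Ψj Ψk lam Ωj Ωk μ : ℝ)
    (hlow : Δout ≥ (∑ h ∈ I, A h * Δ h) + b)
    (hlayer : Ψj * Δ j + Ψk * Δ k + lam ≤ Δ i₀ ∧
              Δ i₀ ≤ Ωj * Δ j + Ωk * Δ k + μ) :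
    Δout ≥ (∑ h ∈ I.erase i₀ ∪ {j, k},
        (if h = j then (if j ∈ I then A j else 0) + max (A i₀) 0 * Ψj + min (A i₀) 0 * Ωj
         else if h = k then (if k ∈ I then A k else 0) + max (A i₀) 0 * Ψk + min (A i₀) 0 * Ωk
         else A h) * Δ h)
      + (b + max (A i₀) 0 * lam + min (A i₀) 0 * μ) := by
  set p := max (A i₀) 0
  set m := min (A i₀) 0
  have hsubst := mul_add_sum_erase_union_pair hi₀ hji hki hjk A Δ
    (p * Ψj + m * Ωj) (p * Ψk + m * Ωk)
  simp only [← add_assoc] at hsubst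
  have hsplit : p * (Ψj * Δ j + Ψk * Δ k + lam) + m * (Ωj * Δ j + Ωk * Δ k + μ) ≤ A i₀ * Δ i₀ :=
    max_zero_mul_add_min_zero_mul_le_mul hlayer.1 hlayer.2
  linear_combination hlow + hsplit + hsubst
end
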